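/- arXiv:2007.05553 — 3 statements merged into one kernel-verified Lean document; each statement's English description precedes it below -/
import Mathlib

section
/- Perfect secrecy of one share in additive secret sharing: if u₁,…,u_{M−1} are independent uniform random variables on ZMod R and u_M := −(u₁ + ⋯ + u_{M−1}), then for any fixed y ∈ ZMod R, the joint distribution of any M−1 of the values (y + u₁, u₂, …, u_M) is uniform on (ZMod R)^{M−1}, i.e., does not depend on y. -/
open MeasureTheory Finset

/-- Perfect secrecy of additive secret sharing: with `u₁,…,u_{M-1}` i.i.d.
uniform on `ZMod R` and `u_M = −Σ_{l<M-1} u_l`, the messages are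
`m₁ = y + u₁` and `m_l = u_l` for `l ≥ 2`.  Any `M−1` of the messages
(i.e. all but one index `t`) are jointly uniform on `(ZMod R)^{M−1}`,
independently of the secret `y`. -/
theorem secret_sharing_perfect_secrecy
    (R M : ℕ) (hR : 0 < R) (hM : 2 ≤ M) (y : ZMod R) (t : Fin M) :
    haveI : NeZero R := ⟨hR.ne'⟩
    letI : MeasurableSpace (ZMod R) := ⊤
    letI unif : Measure (ZMod R) := (PMF.uniformOfFintype (ZMod R)).toMeasure
    letI μ : Measure (Fin (M - 1) → ZMod R) := Measure.pi fun _ => unif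
    letI mfun : (Fin (M - 1) → ZMod R) → Fin M → ZMod R := fun ω l =>
      (if (l : ℕ) = 0 then y else 0) +
        (if h : (l : ℕ) < M - 1 then ω ⟨l, h⟩ else -∑ i, ω i)
    Measure.map (fun ω => fun l : {l : Fin M // l ≠ t} => mfun ω (l : Fin M)) μ
      = Measure.pi fun _ : {l : Fin M // l ≠ t} => unif := by
  haveI : NeZero R := ⟨hR.ne'⟩
  letI : MeasurableSpace (ZMod R) := ⊤
  haveI : MeasurableSingletonClass (ZMod R) := ⟨fun _ => trivial⟩
  set unif : Measure (ZMod R) := (PMF.uniformOfFintype (ZMod R)).toMeasure with hunif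
  set μ : Measure (Fin (M - 1) → ZMod R) := Measure.pi fun _ => unif with hμ
  set mfun : (Fin (M - 1) → ZMod R) → Fin M → ZMod R := fun ω l =>
      (if (l : ℕ) = 0 then y else 0) +
        (if h : (l : ℕ) < M - 1 then ω ⟨l, h⟩ else -∑ i, ω i) with hmfun
  set E : (Fin (M - 1) → ZMod R) → ({l : Fin M // l ≠ t} → ZMod R) :=
      fun ω => fun l : {l : Fin M // l ≠ t} => mfun ω (l : Fin M) with hE
  -- cardinality of the index set
  have hcard : Fintype.card {l : Fin M // l ≠ t} = M - 1 := by
    have : Fintype.card {l : Fin M // l ≠ t}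
        = Fintype.card (Fin M) - Fintype.card {l : Fin M // l = t} :=
      Fintype.card_subtype_compl _
    simp [this, Fintype.card_subtype_eq]
  -- uniform singleton value
  have hsing : ∀ a : ZMod R, unif {a} = ((R : ENNReal))⁻¹ := by
    intro a
    rw [hunif, PMF.toMeasure_apply_singleton _ _ (measurableSet_singleton a)]
    simp [PMF.uniformOfFintype_apply, ZMod.card]
  -- injectivity of E
  have hinj : Function.Injective E := by
    intro ω ω' h
    funext i
    have hiM : (i : ℕ) < M := lt_of_lt_of_le i.2 (Nat.sub_le M 1)
    have key : ∀ l : Fin M, l ≠ t → mfun ω l = mfun ω' l := fun l hl =>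
      congrFun h ⟨l, hl⟩
    by_cases hit : (⟨i, hiM⟩ : Fin M) = t
    · -- use the last coordinate and all others
      have hlast : (⟨M - 1, Nat.sub_lt (by omega) one_pos⟩ : Fin M) ≠ t := by
        intro hc
        apply absurd (hit.trans hc.symm)
        intro hc2
        have := congrArg Fin.val hc2
        simp at this
        omega
      have hsum : (∑ j, ω j) = ∑ j, ω' j := by
        have := key _ hlast
        simp only [hmfun] at this
        rw [dif_neg (by omega), dif_neg (by omega)] at this
        exact neg_injective (by simpa using this)
      have hoth : ∀ j : Fin (M - 1), j ≠ i → ω j = ω' j := by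
        intro j hj
        have hjM : (j : ℕ) < M := lt_of_lt_of_le j.2 (Nat.sub_le M 1)
        have hjt : (⟨j, hjM⟩ : Fin M) ≠ t := by
          intro hc
          apply hj
          have : (j : ℕ) = (i : ℕ) := by
            have := congrArg Fin.val (hc.trans hit.symm)
            simpa using this
          exact Fin.ext this
        have := key _ hjt
        simp only [hmfun] at this
        rw [dif_pos (show ((⟨j, hjM⟩ : Fin M) : ℕ) < M - 1 from j.2),
            dif_pos (show ((⟨j, hjM⟩ : Fin M) : ℕ) < M - 1 from j.2)] at this
        have := add_left_cancel this
        simpa using this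
      have h1 : ω i + ∑ j ∈ univ.erase i, ω j = ω' i + ∑ j ∈ univ.erase i, ω' j := by
        rw [Finset.add_sum_erase _ _ (mem_univ i), Finset.add_sum_erase _ _ (mem_univ i)]
        exact hsum
      have h2 : ∑ j ∈ univ.erase i, ω j = ∑ j ∈ univ.erase i, ω' j :=
        Finset.sum_congr rfl fun j hj => hoth j (Finset.ne_of_mem_erase hj)
      rw [h2] at h1
      exact add_right_cancel h1
    · have := key _ hit
      simp only [hmfun] at this
      rw [dif_pos (show ((⟨i, hiM⟩ : Fin M) : ℕ) < M - 1 from i.2),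
          dif_pos (show ((⟨i, hiM⟩ : Fin M) : ℕ) < M - 1 from i.2)] at this
      have := add_left_cancel this
      simpa using this
  have hbij : Function.Bijective E := by
    rw [Fintype.bijective_iff_injective_and_card]
    refine ⟨hinj, ?_⟩
    simp [Fintype.card_fun, hcard]
  have hmeas : Measurable E := measurable_of_countable E
  refine Measure.ext_of_singleton fun f => ?_
  rw [Measure.map_apply hmeas (measurableSet_singleton f)]
  have hpre : E ⁻¹' {f} = {(Equiv.ofBijective E hbij).symm f} := by
    ext ω
    simp only [Set.mem_preimage, Set.mem_singleton_iff]
    exact (Equiv.ofBijective E hbij).apply_eq_iff_eq_symm_apply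
  rw [hpre]
  have hsingval : ∀ (ι : Type) [Fintype ι] (g : ι → ZMod R),
      (Measure.pi fun _ : ι => unif) {g} = ((R : ENNReal))⁻¹ ^ Fintype.card ι := by
    intro ι _ g
    rw [← Set.univ_pi_singleton g, Measure.pi_pi]
    simp [hsing, Finset.prod_const, Finset.card_univ]
  rw [hμ]
  rw [hsingval _ ((Equiv.ofBijective E hbij).symm f), hsingval _ f]
  rw [hcard]
  simp
end

section
/- The Gaussian mechanism is (ε, δ)-differentially private in one dimension: for f : D → ℝ with sensitivity Δ, releasing f(D) + N(0, σ²) with σ = Δ·√(2 ln(1.25/δ))/ε satisfies (ε, δ)-DP, for ε ∈ (0,1). -/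
open MeasureTheory ProbabilityTheory
open scoped NNReal ENNReal

/-!
With `d = m₁ - m₂`, the density ratio of `N(m₁, v)` to `N(m₂, v)` at `x` is
`exp ((d (x - m₁) + d² / 2) / v)`. For `0 ≤ d ≤ Δ` it is at most `e^ε` on the half-line
`x ≤ m₁ + t`, `t = v ε / Δ - Δ / 2`, so splitting `E` along that half-line gives
`P₁(E) ≤ e^ε P₂(E) + P(N(0, v) > t)`; the case `d < 0` follows by reflection.

With `L = log (1.25 / δ)` the calibration reads `v = 2 L Δ² / ε²` and `t = Δ (4L - ε) / (2ε)`.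
If `t ≥ 0`, comparing `N(0, v)` with `N(t, v)` beyond `t` bounds the tail by
`exp (-t² / 2v) / 2 ≤ e^(ε/2 - L) / 2 ≤ e^(-L) < δ`. If `t < 0`, then `L < 1/4`, so `δ ≥ 15/16`,
while the tail is at most `1/2` plus the mass of `(t, 0]`, which is at most `7/16`.
-/

open Set Real

namespace MeasureTheory.Measure

variable {α : Type*} [MeasurableSpace α] {ρ : Measure α} [SFinite ρ] {f g : α → ℝ≥0∞}
  {c : ℝ≥0∞}

lemma withDensity_apply_le_mul_of_le (hg : Measurable g) {E : Set α}
    (hfg : ∀ x ∈ E, f x ≤ c * g x) :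
    ρ.withDensity f E ≤ c * ρ.withDensity g E := by
  rw [withDensity_apply' _ E, withDensity_apply' _ E, ← lintegral_const_mul c hg]
  exact setLIntegral_mono (hg.const_mul c) hfg

lemma withDensity_apply_le_mul_add_compl (hg : Measurable g) {S : Set α}
    (hfg : ∀ x ∈ S, f x ≤ c * g x) (E : Set α) :
    ρ.withDensity f E ≤ c * ρ.withDensity g E + ρ.withDensity f Sᶜ :=
  calc ρ.withDensity f E ≤ ρ.withDensity f (E ∩ S) + ρ.withDensity f (E \ S) :=
        measure_le_inter_add_sdiff _ _ _
    _ ≤ c * ρ.withDensity g E + ρ.withDensity f Sᶜ := by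
        gcongr
        · exact (withDensity_apply_le_mul_of_le hg fun x hx => hfg x hx.2).trans
            (by gcongr; exact inter_subset_left)
        · exact sdiff_subset_compl _ _

end MeasureTheory.Measure

namespace ProbabilityTheory

lemma gaussianPDFReal_eq_exp_mul (m₁ m₂ : ℝ) (v : ℝ≥0) (x : ℝ) :
    gaussianPDFReal m₁ v x
      = exp (((m₁ - m₂) * (x - m₁) + (m₁ - m₂) ^ 2 / 2) / v) * gaussianPDFReal m₂ v x := by
  rw [gaussianPDFReal, gaussianPDFReal, mul_left_comm, ← exp_add]
  ring_nf

lemma gaussianPDF_le_ofReal_exp_mul {m₁ m₂ x r : ℝ} {v : ℝ≥0}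
    (h : (m₁ - m₂) * (x - m₁) + (m₁ - m₂) ^ 2 / 2 ≤ v * r) :
    gaussianPDF m₁ v x ≤ ENNReal.ofReal (exp r) * gaussianPDF m₂ v x := by
  rcases eq_or_ne v 0 with rfl | hv
  · simp
  rw [gaussianPDF, gaussianPDF, ← ENNReal.ofReal_mul (exp_pos r).le,
    gaussianPDFReal_eq_exp_mul m₁ m₂]
  gcongr
  · exact gaussianPDFReal_nonneg _ _ _
  · rwa [div_le_iff₀' (by positivity)]

lemma gaussianPDFReal_le (m : ℝ) (v : ℝ≥0) (x : ℝ) :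
    gaussianPDFReal m v x ≤ (√(2 * π * v))⁻¹ := by
  rw [gaussianPDFReal]
  refine mul_le_of_le_one_right (by positivity) (exp_le_one_iff.2 ?_)
  exact div_nonpos_of_nonpos_of_nonneg (by nlinarith [sq_nonneg (x - m)]) (by positivity)

lemma gaussianReal_le_mul_volume (m : ℝ) {v : ℝ≥0} (hv : v ≠ 0) (s : Set ℝ) :
    gaussianReal m v s ≤ ENNReal.ofReal (√(2 * π * v))⁻¹ * volume s := by
  rw [gaussianReal_apply m hv, ← setLIntegral_const]
  exact setLIntegral_mono measurable_const fun x _ =>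
    ENNReal.ofReal_le_ofReal (gaussianPDFReal_le m v x)

lemma gaussianReal_neg_apply_neg (m : ℝ) (v : ℝ≥0) (s : Set ℝ) :
    gaussianReal (-m) v (-s) = gaussianReal m v s := by
  rw [← gaussianReal_map_neg]
  exact ((MeasurableEquiv.neg ℝ).map_apply (-s)).trans (by simp)

lemma gaussianReal_Ioi_self_le_half (m : ℝ) (v : ℝ≥0) :
    gaussianReal m v (Ioi m) ≤ 2⁻¹ := by
  have hsymm : gaussianReal m v (Iio m) = gaussianReal m v (Ioi m) := by
    have hrefl : (gaussianReal m v).map (2 * m - ·) = gaussianReal m v := by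
      rw [gaussianReal_map_const_sub]; ring_nf
    conv_lhs => rw [← hrefl]
    rw [Measure.map_apply (by fun_prop) measurableSet_Iio, preimage_const_sub_Iio, two_mul,
      add_sub_cancel_right]
  have hsum : gaussianReal m v (Ioi m) + gaussianReal m v (Iio m) ≤ 1 := by
    rw [← measure_union Ioi_disjoint_Iio_same measurableSet_Iio]
    exact prob_le_one
  rw [ENNReal.le_inv_iff_mul_le, mul_two]
  rwa [hsymm] at hsum

lemma gaussianReal_Ioi_le_of_nonneg {v : ℝ≥0} (hv : v ≠ 0) {a : ℝ} (ha : 0 ≤ a) :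
    gaussianReal 0 v (Ioi a) ≤ ENNReal.ofReal (exp (-a ^ 2 / (2 * v)) / 2) := by
  have hpdf : ∀ x ∈ Ioi a,
      gaussianPDF 0 v x ≤ ENNReal.ofReal (exp (-a ^ 2 / (2 * v))) * gaussianPDF a v x := by
    refine fun x hx => gaussianPDF_le_ofReal_exp_mul ?_
    rw [show (v : ℝ) * (-a ^ 2 / (2 * v)) = -a ^ 2 / 2 by field_simp]
    nlinarith [mul_le_mul_of_nonneg_left (le_of_lt (mem_Ioi.1 hx)) ha]
  calc gaussianReal 0 v (Ioi a)
      ≤ ENNReal.ofReal (exp (-a ^ 2 / (2 * v))) * gaussianReal a v (Ioi a) := by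
        simp only [gaussianReal_of_var_ne_zero _ hv]
        exact Measure.withDensity_apply_le_mul_of_le (measurable_gaussianPDF a v) hpdf
    _ ≤ ENNReal.ofReal (exp (-a ^ 2 / (2 * v))) * 2⁻¹ := by
        gcongr; exact gaussianReal_Ioi_self_le_half a v
    _ = ENNReal.ofReal (exp (-a ^ 2 / (2 * v)) / 2) := by
        rw [ENNReal.ofReal_div_of_pos two_pos, ENNReal.ofReal_ofNat, div_eq_mul_inv _ (2 : ℝ≥0∞)]

lemma gaussianReal_Ioi_le_of_nonpos {v : ℝ≥0} (hv : v ≠ 0) {a : ℝ} (ha : a ≤ 0) :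
    gaussianReal 0 v (Ioi a) ≤ ENNReal.ofReal (1 / 2 - a / √(2 * π * v)) :=
  calc gaussianReal 0 v (Ioi a) ≤ gaussianReal 0 v (Ioc a 0) + gaussianReal 0 v (Ioi 0) := by
        rw [← Ioc_union_Ioi_eq_Ioi ha]; exact measure_union_le _ _
    _ ≤ ENNReal.ofReal (√(2 * π * v))⁻¹ * volume (Ioc a 0) + 2⁻¹ :=
        add_le_add (gaussianReal_le_mul_volume 0 hv _) (gaussianReal_Ioi_self_le_half 0 v)
    _ = ENNReal.ofReal (1 / 2 - a / √(2 * π * v)) := by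
        rw [Real.volume_Ioc, ← ENNReal.ofReal_mul (by positivity),
          show 1 / 2 - a / √(2 * π * v) = (√(2 * π * v))⁻¹ * (0 - a) + 2⁻¹ by ring,
          ENNReal.ofReal_add (mul_nonneg (by positivity) (by linarith)) (by norm_num),
          ENNReal.ofReal_inv_of_pos two_pos, ENNReal.ofReal_ofNat]

lemma gaussianReal_le_exp_mul_add_tail_of_le {v : ℝ≥0} (hv : v ≠ 0) {ε Δ m₁ m₂ : ℝ}
    (hε : 0 ≤ ε) (hΔ : 0 < Δ) (h₁₂ : m₂ ≤ m₁) (hΔ₁₂ : m₁ - m₂ ≤ Δ) (E : Set ℝ) :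
    gaussianReal m₁ v E ≤ ENNReal.ofReal (exp ε) * gaussianReal m₂ v E
      + gaussianReal 0 v (Ioi (v * ε / Δ - Δ / 2)) := by
  set t := v * ε / Δ - Δ / 2
  have hpdf : ∀ x ∈ Iic (m₁ + t),
      gaussianPDF m₁ v x ≤ ENNReal.ofReal (exp ε) * gaussianPDF m₂ v x := by
    refine fun x hx => gaussianPDF_le_ofReal_exp_mul ?_
    have hd : 0 ≤ m₁ - m₂ := sub_nonneg.2 h₁₂
    have hx' : x - m₁ ≤ v * ε / Δ - Δ / 2 := sub_le_iff_le_add'.2 hx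
    have hΔt : Δ * (v * ε / Δ) = v * ε := mul_div_cancel₀ _ hΔ.ne'
    nlinarith [mul_le_mul_of_nonneg_left hx' hd,
      mul_le_mul_of_nonneg_right hΔ₁₂ (by positivity : 0 ≤ v * ε / Δ),
      mul_nonneg hd (sub_nonneg.2 hΔ₁₂)]
  have htail : gaussianReal m₁ v (Iic (m₁ + t))ᶜ = gaussianReal 0 v (Ioi t) := by
    rw [compl_Iic, ← zero_add m₁, ← gaussianReal_map_add_const,
      Measure.map_apply (measurable_add_const m₁) measurableSet_Ioi, preimage_add_const_Ioi]
    congr 2; ring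
  calc gaussianReal m₁ v E ≤ ENNReal.ofReal (exp ε) * gaussianReal m₂ v E
        + gaussianReal m₁ v (Iic (m₁ + t))ᶜ := by
        simp only [gaussianReal_of_var_ne_zero _ hv]
        exact Measure.withDensity_apply_le_mul_add_compl (measurable_gaussianPDF m₂ v) hpdf E
    _ = _ := by rw [htail]

lemma gaussianReal_le_exp_mul_add_tail {v : ℝ≥0} (hv : v ≠ 0) {ε Δ m₁ m₂ : ℝ}
    (hε : 0 ≤ ε) (hΔ : 0 < Δ) (hm : |m₁ - m₂| ≤ Δ) (E : Set ℝ) :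
    gaussianReal m₁ v E ≤ ENNReal.ofReal (exp ε) * gaussianReal m₂ v E
      + gaussianReal 0 v (Ioi (v * ε / Δ - Δ / 2)) := by
  rcases le_total m₂ m₁ with h | h
  · exact gaussianReal_le_exp_mul_add_tail_of_le hv hε hΔ h (abs_le.1 hm).2 E
  · have := gaussianReal_le_exp_mul_add_tail_of_le hv hε hΔ (neg_le_neg h)
      (by linarith [(abs_le.1 hm).1]) (-E)
    simpa only [gaussianReal_neg_apply_neg] using this

lemma gaussianReal_Ioi_le_exp_neg_of_le_four_mul {Δ ε L : ℝ} (hΔ : 0 < Δ) (hε0 : 0 < ε)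
    (hε1 : ε < 1) (hL : 0 < L) (h : ε ≤ 4 * L) :
    gaussianReal 0 (2 * L * Δ ^ 2 / ε ^ 2).toNNReal (Ioi (Δ * (4 * L - ε) / (2 * ε)))
      ≤ ENNReal.ofReal (exp (-L)) := by
  have hv : (2 * L * Δ ^ 2 / ε ^ 2).toNNReal ≠ 0 := by simp; positivity
  refine (gaussianReal_Ioi_le_of_nonneg hv (by have := sub_nonneg.2 h; positivity)).trans
    (ENNReal.ofReal_le_ofReal ?_)
  rw [Real.coe_toNNReal _ (by positivity)]
  have hexpo : -(Δ * (4 * L - ε) / (2 * ε)) ^ 2 / (2 * (2 * L * Δ ^ 2 / ε ^ 2)) ≤ ε / 2 - L := by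
    rw [show -(Δ * (4 * L - ε) / (2 * ε)) ^ 2 / (2 * (2 * L * Δ ^ 2 / ε ^ 2))
      = -(4 * L - ε) ^ 2 / (16 * L) by field_simp; ring, div_le_iff₀ (by positivity)]
    nlinarith [sq_nonneg ε]
  have hexp_half : exp (ε / 2) ≤ 2 := by
    refine (exp_bound_div_one_sub_of_interval (by positivity) (by linarith)).trans ?_
    rw [div_le_iff₀ (by linarith)]; linarith
  calc _ ≤ exp (ε / 2 - L) / 2 := by gcongr
    _ = exp (ε / 2) * exp (-L) / 2 := by rw [sub_eq_add_neg, exp_add]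
    _ ≤ exp (-L) := by nlinarith [exp_pos (-L)]

lemma gaussianReal_Ioi_le_of_four_mul_le {Δ ε L : ℝ} (hΔ : 0 < Δ) (hε1 : ε < 1)
    (hL : 1 / 5 ≤ L) (h : 4 * L ≤ ε) :
    gaussianReal 0 (2 * L * Δ ^ 2 / ε ^ 2).toNNReal (Ioi (Δ * (4 * L - ε) / (2 * ε)))
      ≤ ENNReal.ofReal (15 / 16) := by
  have hε0 : 0 < ε := by linarith
  have hv : (2 * L * Δ ^ 2 / ε ^ 2).toNNReal ≠ 0 := by simp; positivity
  refine (gaussianReal_Ioi_le_of_nonpos hv ?_).trans (ENNReal.ofReal_le_ofReal ?_)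
  · exact div_nonpos_of_nonpos_of_nonneg (mul_nonpos_of_nonneg_of_nonpos hΔ.le (by linarith))
      (by positivity)
  rw [Real.coe_toNNReal _ (by positivity)]
  have hsqrt : 16 / 7 * -(Δ * (4 * L - ε) / (2 * ε)) ≤ √(2 * π * (2 * L * Δ ^ 2 / ε ^ 2)) := by
    refine (le_abs_self _).trans (abs_le_sqrt ?_)
    field_simp
    nlinarith [pi_gt_three]
  have hratio : -(Δ * (4 * L - ε) / (2 * ε)) / √(2 * π * (2 * L * Δ ^ 2 / ε ^ 2)) ≤ 7 / 16 := by
    rw [div_le_iff₀ (by positivity)]; linarith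
  rw [sub_eq_add_neg, ← neg_div]
  linarith

lemma pos_of_eq_calibration {Δ ε δ σ : ℝ} (hΔ : 0 < Δ) (hε : 0 < ε) (hδ0 : 0 < δ)
    (hδ1 : δ < 1) (hσ : σ = Δ * √(2 * log (1.25 / δ)) / ε) : 0 < σ := by
  have hL : 0 < log (1.25 / δ) := log_pos (by rw [lt_div_iff₀ hδ0]; linarith)
  rw [hσ]; positivity

lemma gaussianReal_Ioi_le_of_eq_calibration {Δ ε δ σ : ℝ} (hΔ : 0 < Δ) (hε0 : 0 < ε)
    (hε1 : ε < 1) (hδ0 : 0 < δ) (hδ1 : δ < 1) (hσ : σ = Δ * √(2 * log (1.25 / δ)) / ε) :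
    gaussianReal 0 (σ ^ 2).toNNReal (Ioi (σ ^ 2 * ε / Δ - Δ / 2)) ≤ ENNReal.ofReal δ := by
  have hL : 1 / 5 ≤ log (1.25 / δ) := by
    have := one_sub_inv_le_log_of_pos (show 0 < 1.25 / δ by positivity)
    rw [inv_div] at this
    linarith [(div_le_div_iff_of_pos_right (by norm_num : (0 : ℝ) < 1.25)).2 hδ1.le]
  set L := log (1.25 / δ)
  have hδL : δ = 1.25 * exp (-L) := by
    rw [exp_neg, exp_log (by positivity)]; field_simp
  have hσ2 : σ ^ 2 = 2 * L * Δ ^ 2 / ε ^ 2 := by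
    rw [hσ, div_pow, mul_pow, sq_sqrt (by linarith)]; ring
  have ht : σ ^ 2 * ε / Δ - Δ / 2 = Δ * (4 * L - ε) / (2 * ε) := by
    rw [hσ2]; field_simp; ring
  rw [ht, hσ2]
  rcases le_total ε (4 * L) with h | h
  · refine (gaussianReal_Ioi_le_exp_neg_of_le_four_mul hΔ hε0 hε1 (by linarith) h).trans
      (ENNReal.ofReal_le_ofReal ?_)
    rw [hδL]; linarith [exp_pos (-L)]
  · refine (gaussianReal_Ioi_le_of_four_mul_le hΔ hε1 hL h).trans (ENNReal.ofReal_le_ofReal ?_)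
    rw [hδL]; linarith [add_one_le_exp (-L)]

end ProbabilityTheory

/-- The one-dimensional Gaussian mechanism is `(ε,δ)`-DP: for a query
`f : D → ℝ` with sensitivity `Δ` (on neighbouring datasets), releasing
`f(D) + N(0, σ²)` with `σ = Δ·√(2 ln(1.25/δ))/ε` satisfies `(ε,δ)`-DP
for `ε ∈ (0,1)`. -/
theorem gaussian_mechanism_dp
    {D : Type*} (Neighb : D → D → Prop)
    (f : D → ℝ) (Δ ε δ : ℝ)
    (hΔ : 0 < Δ) (hε0 : 0 < ε) (hε1 : ε < 1) (hδ0 : 0 < δ) (hδ1 : δ < 1)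
    (hsens : ∀ Dat Dat' : D, Neighb Dat Dat' → |f Dat - f Dat'| ≤ Δ)
    (σ : ℝ) (hσ : σ = Δ * Real.sqrt (2 * Real.log (1.25 / δ)) / ε) :
    ∀ Dat Dat' : D, Neighb Dat Dat' →
      ∀ E : Set ℝ, MeasurableSet E →
        gaussianReal (f Dat) ((σ ^ 2).toNNReal) E
          ≤ ENNReal.ofReal (Real.exp ε)
              * gaussianReal (f Dat') ((σ ^ 2).toNNReal) E
            + ENNReal.ofReal δ := by
  intro Dat Dat' hN E _
  have hv : (σ ^ 2).toNNReal ≠ 0 := by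
    simpa using (pos_of_eq_calibration hΔ hε0 hδ0 hδ1 hσ).ne'
  calc gaussianReal (f Dat) (σ ^ 2).toNNReal E
      ≤ ENNReal.ofReal (exp ε) * gaussianReal (f Dat') (σ ^ 2).toNNReal E
        + gaussianReal 0 (σ ^ 2).toNNReal (Ioi ((σ ^ 2).toNNReal * ε / Δ - Δ / 2)) :=
        gaussianReal_le_exp_mul_add_tail hv hε0.le hΔ (hsens _ _ hN) E
    _ ≤ _ := by
        rw [Real.coe_toNNReal _ (sq_nonneg σ)]
        gcongr
        exact gaussianReal_Ioi_le_of_eq_calibration hΔ hε0 hε1 hδ0 hδ1 hσ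
end

section
/- Privacy amplification by subsampling (remove/add relation, pure ε for simplicity): if M is an (ε, δ)-DP mechanism and S is the Poisson subsampling operation that includes each record independently with probability γ, then M ∘ S is (log(1 + γ(e^ε − 1)), γδ)-DP with respect to the remove/add relation. -/
open MeasureTheory
open scoped ENNReal

/-!
Conditioning on whether the new record `x` is sampled writes the output distribution on `x ::ₘ D`
as the mixture `(1 - γ) · P + γ · Q`, where `P` is the output distribution on `D` and `Q` the one
obtained by adding `x` to every subsample of `D`. Integrating the DP guarantee of `M` over the
subsample gives `Q ≤ e^ε P + δ` and `P ≤ e^ε Q + δ`, and the amplified bounds in both directions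
are then elementary inequalities between the numbers `P E`, `Q E` and their mixture.
-/

theorem le_mixture_of_le_mul_add {γ e δ p q : ℝ} (hγ0 : 0 ≤ γ) (hγ1 : γ ≤ 1) (he : 1 ≤ e)
    (hδ : 0 ≤ δ) (hp : 0 ≤ p) (hq : 0 ≤ q) (h : p ≤ e * q + δ) :
    p ≤ (1 + γ * (e - 1)) * ((1 - γ) * p + γ * q) + γ * δ := by
  -- with `t := 1 - (1 - γ) (e - 1)` one has `(1 + γ (e - 1)) (1 - γ) = 1 - γ t`, `t ≤ 1` and
  -- `t e ≤ 1 + γ (e - 1)`, so `γ t p ≤ γ t (e q + δ)` suffices when `t ≥ 0`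
  rcases le_total 0 (1 - (1 - γ) * (e - 1)) with ht | ht
  · nlinarith [mul_le_mul_of_nonneg_left h (mul_nonneg hγ0 ht),
      mul_nonneg (mul_nonneg (mul_nonneg hγ0 (sub_nonneg.2 hγ1)) (sub_nonneg.2 he)) hδ,
      mul_nonneg (mul_nonneg (mul_nonneg hγ0 (sub_nonneg.2 hγ1)) (mul_self_nonneg (e - 1))) hq]
  · nlinarith [mul_nonneg hγ0 hδ, mul_nonneg (mul_nonneg hγ0 (neg_nonneg.2 ht)) hp,
      mul_nonneg (mul_nonneg hγ0 (by nlinarith : (0 : ℝ) ≤ 1 + γ * (e - 1))) hq]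

namespace ENNReal

theorem mixture_le_of_le_mul_add {γ e δ : ℝ} {p q : ℝ≥0∞} (hγ0 : 0 ≤ γ) (hγ1 : γ ≤ 1)
    (he : 1 ≤ e) (h : q ≤ .ofReal e * p + .ofReal δ) :
    .ofReal (1 - γ) * p + .ofReal γ * q ≤ .ofReal (1 + γ * (e - 1)) * p + .ofReal (γ * δ) :=
  calc .ofReal (1 - γ) * p + .ofReal γ * q
      ≤ .ofReal (1 - γ) * p + .ofReal γ * (.ofReal e * p + .ofReal δ) := by gcongr
    _ = (.ofReal (1 - γ) + .ofReal (γ * e)) * p + .ofReal (γ * δ) := by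
      rw [ofReal_mul hγ0, ofReal_mul hγ0]; ring
    _ = .ofReal (1 + γ * (e - 1)) * p + .ofReal (γ * δ) := by
      rw [← ofReal_add (by linarith) (by nlinarith)]; ring_nf

theorem le_mixture_of_le_mul_add {γ e δ : ℝ} {p q : ℝ≥0∞} (hγ0 : 0 ≤ γ) (hγ1 : γ ≤ 1)
    (he : 1 ≤ e) (hδ : 0 ≤ δ) (hp : p ≠ ∞) (hq : q ≠ ∞) (h : p ≤ .ofReal e * q + .ofReal δ) :
    p ≤ .ofReal (1 + γ * (e - 1)) * (.ofReal (1 - γ) * p + .ofReal γ * q) + .ofReal (γ * δ) := by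
  rw [← ofReal_toReal hp, ← ofReal_toReal hq] at h ⊢
  have hp' := p.toReal_nonneg
  have hq' := q.toReal_nonneg
  have hc : 0 ≤ 1 + γ * (e - 1) := by nlinarith
  have hm : 0 ≤ (1 - γ) * p.toReal + γ * q.toReal := by nlinarith
  rw [← ofReal_mul (by linarith), ← ofReal_add (by positivity) hδ,
    ofReal_le_ofReal_iff (by positivity)] at h
  rw [← ofReal_mul (by linarith), ← ofReal_mul hγ0, ← ofReal_add (by nlinarith) (by positivity),
    ← ofReal_mul hc, ← ofReal_add (mul_nonneg hc hm) (by positivity)]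
  exact ofReal_le_ofReal (_root_.le_mixture_of_le_mul_add hγ0 hγ1 he hδ hp' hq' h)

end ENNReal

section

variable {β R : Type*} [MeasurableSpace β] [MeasurableSpace R]

theorem lintegral_le_const_mul_lintegral_add {ν : Measure β} [IsProbabilityMeasure ν]
    {f g : β → ℝ≥0∞} {c d : ℝ≥0∞} (hc : c ≠ ∞) (h : ∀ b, f b ≤ c * g b + d) :
    ∫⁻ b, f b ∂ν ≤ c * ∫⁻ b, g b ∂ν + d :=
  calc ∫⁻ b, f b ∂ν ≤ ∫⁻ b, c * g b + d ∂ν := lintegral_mono h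
    _ = c * ∫⁻ b, g b ∂ν + d := by
      rw [lintegral_add_right _ measurable_const, lintegral_const_mul' _ _ hc, lintegral_const,
        measure_univ, mul_one]

theorem lintegral_measure_apply_ne_top (ν : Measure β) [IsProbabilityMeasure ν]
    (μ : β → Measure R) [∀ b, IsProbabilityMeasure (μ b)] (E : Set R) :
    ∫⁻ b, μ b E ∂ν ≠ ∞ :=
  ne_top_of_le_ne_top ENNReal.one_ne_top <|
    (lintegral_mono fun _ => prob_le_one).trans_eq (by simp)

theorem Measure.bind_smul_add_smul_map_apply {ν : Measure β} {μ : β → Measure R}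
    (hμ : Measurable μ) {f : β → β} (hf : Measurable f) (s t : ℝ≥0∞) {E : Set R}
    (hE : MeasurableSet E) :
    ((s • ν + t • ν.map f).bind μ) E = s * ∫⁻ b, μ b E ∂ν + t * ∫⁻ b, μ (f b) E ∂ν := by
  rw [Measure.bind_apply hE hμ.aemeasurable, lintegral_add_measure, lintegral_smul_measure,
    lintegral_smul_measure,
    lintegral_map (f := fun b => μ b E) (Measure.measurable_coe hE |>.comp hμ) hf,
    smul_eq_mul, smul_eq_mul]

end

/-- Privacy amplification by Poisson subsampling (remove/add relation):
if `M` is `(ε,δ)`-DP with respect to the remove/add relation on multiset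
datasets, and `S` is Poisson subsampling which includes each record
independently with probability `γ` (characterized by
`S(x ::ₘ D) = (1−γ)·S(D) + γ·(x ::ₘ ·)∗S(D)`), then the subsampled mechanism
`D ↦ M(S(D))` is `(log(1 + γ(e^ε − 1)), γδ)`-DP. -/
theorem poisson_subsampling_amplification
    {α : Type*} {R : Type*} [MeasurableSpace R]
    (γ ε δ : ℝ) (hγ0 : 0 < γ) (hγ1 : γ < 1) (hε : 0 ≤ ε) (hδ : 0 ≤ δ) :
    letI : MeasurableSpace (Multiset α) := ⊤
    ∀ (M : Multiset α → Measure R)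
      (_ : ∀ Dat, IsProbabilityMeasure (M Dat)) (_ : Measurable M)
      (S : Multiset α → Measure (Multiset α))
      (_ : ∀ Dat, IsProbabilityMeasure (S Dat))
      (_ : ∀ (Dat : Multiset α) (x : α),
        S (x ::ₘ Dat) = ENNReal.ofReal (1 - γ) • S Dat
          + ENNReal.ofReal γ • (S Dat).map (fun B => x ::ₘ B))
      (_ : ∀ (Dat : Multiset α) (x : α), ∀ E : Set R, MeasurableSet E →
        M (x ::ₘ Dat) E ≤ ENNReal.ofReal (Real.exp ε) * M Dat E + ENNReal.ofReal δ
        ∧ M Dat E ≤ ENNReal.ofReal (Real.exp ε) * M (x ::ₘ Dat) E + ENNReal.ofReal δ),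
    ∀ (Dat : Multiset α) (x : α), ∀ E : Set R, MeasurableSet E →
      ((S (x ::ₘ Dat)).bind M) E
        ≤ ENNReal.ofReal (Real.exp (Real.log (1 + γ * (Real.exp ε - 1))))
            * ((S Dat).bind M) E + ENNReal.ofReal (γ * δ)
      ∧ ((S Dat).bind M) E
        ≤ ENNReal.ofReal (Real.exp (Real.log (1 + γ * (Real.exp ε - 1))))
            * ((S (x ::ₘ Dat)).bind M) E + ENNReal.ofReal (γ * δ) := by
  let _ : MeasurableSpace (Multiset α) := ⊤
  intro M _ hM S _ hS hDP Dat x E hE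
  have he : 1 ≤ Real.exp ε := Real.one_le_exp hε
  have hc : 0 < 1 + γ * (Real.exp ε - 1) := by nlinarith
  rw [Real.exp_log hc, hS, Measure.bind_smul_add_smul_map_apply hM measurable_from_top _ _ hE,
    Measure.bind_apply hE hM.aemeasurable]
  have hq : ∫⁻ B, M (x ::ₘ B) E ∂S Dat ≤ .ofReal (Real.exp ε) * ∫⁻ B, M B E ∂S Dat + .ofReal δ :=
    lintegral_le_const_mul_lintegral_add ENNReal.ofReal_ne_top fun B => (hDP B x E hE).1
  have hp : ∫⁻ B, M B E ∂S Dat ≤ .ofReal (Real.exp ε) * ∫⁻ B, M (x ::ₘ B) E ∂S Dat + .ofReal δ :=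
    lintegral_le_const_mul_lintegral_add ENNReal.ofReal_ne_top fun B => (hDP B x E hE).2
  exact ⟨ENNReal.mixture_le_of_le_mul_add hγ0.le hγ1.le he hq,
    ENNReal.le_mixture_of_le_mul_add hγ0.le hγ1.le he hδ
      (lintegral_measure_apply_ne_top _ M E) (lintegral_measure_apply_ne_top _ _ E) hp⟩
end
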